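/- Let X be a topological space and let E₁, …, Eₙ be pairwise disjoint H₁-retracts of X such that each Eᵢ is a Coz_δ-set in X. Then the union E = E₁ ∪ … ∪ Eₙ is an H₁-retract of X. -/

import Mathlib

/-- A set is an Fσ-set if it is a countable union of closed sets. -/
def IsFsigma {X : Type*} [TopologicalSpace X] (A : Set X) : Prop :=
  ∃ F : ℕ → Set X, (∀ n, IsClosed (F n)) ∧ A = ⋃ n, F n

/-- A mapping is of the first Lebesgue class if the preimage of every open set is Fσ. -/
def LebesgueClassOne {X Y : Type*} [TopologicalSpace X] [TopologicalSpace Y] (g : X → Y) : Prop :=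
  ∀ V : Set Y, IsOpen V → IsFsigma (g ⁻¹' V)

/-- `E` is an H₁-retract of `X` if there is a first Lebesgue class map `r : X → E`
fixing the points of `E`. -/
def IsH1Retract {X : Type*} [TopologicalSpace X] (E : Set X) : Prop :=
  ∃ r : X → E, (∀ x : E, r x = x) ∧ LebesgueClassOne r
/-- A set is a Coz_δ-set if it is the intersection `⋂ₙ fₙ⁻¹((0,1])` for a sequence of
continuous functions `fₙ : X → [0,1]`. -/
def IsCozDelta {X : Type*} [TopologicalSpace X] (E : Set X) : Prop :=
  ∃ f : ℕ → X → ℝ, (∀ n, Continuous (f n)) ∧ (∀ n x, f n x ∈ Set.Icc (0:ℝ) 1) ∧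
    E = ⋂ n, (f n) ⁻¹' Set.Ioc (0:ℝ) 1

/-- A set is a Zer_σ-set if its complement is a Coz_δ-set. -/
def IsZerSigma {X : Type*} [TopologicalSpace X] (E : Set X) : Prop :=
  IsCozDelta Eᶜ

/-- A set is functionally ambiguous if it is simultaneously Coz_δ and Zer_σ. -/
def FunctionallyAmbiguous {X : Type*} [TopologicalSpace X] (E : Set X) : Prop :=
  IsCozDelta E ∧ IsZerSigma E

/-!
Each `Eᵢ` is a countable intersection of open Fσ-sets `Uᵢₖ` (namely `{fᵢₖ > 0}`). For an index
`i` and a choice `κ` of one `k` for every `j`, the closed set `⋂_{j ≠ i} (U_{j,κ(j)})ᶜ` has an Fσ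
complement and meets no `Eⱼ` with `j ≠ i`; since the `Eᵢ` are disjoint, these countably many
closed sets cover `X`. Enumerate them as `Z₀, Z₁, …`: the first-hit pieces `Zₘ \ ⋃_{l<m} Z_l`
partition `X` into Fσ-sets, and gluing the retractions `rᵢ` along this partition gives a map of
the first class which fixes every point of `⋃ Eᵢ`.
-/

open Set Function

section Fsigma

variable {X : Type*} [TopologicalSpace X]

theorem isFsigma_iff_isGδ_compl {A : Set X} : IsFsigma A ↔ IsGδ Aᶜ := by
  rw [isGδ_iff_eq_iInter_nat]
  constructor
  · rintro ⟨F, hF, rfl⟩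
    exact ⟨fun n => (F n)ᶜ, fun n => (hF n).isOpen_compl, compl_iUnion F⟩
  · rintro ⟨U, hU, hA⟩
    refine ⟨fun n => (U n)ᶜ, fun n => (hU n).isClosed_compl, ?_⟩
    rw [← compl_iInter, ← hA, compl_compl]

theorem IsClosed.isFsigma {A : Set X} (h : IsClosed A) : IsFsigma A :=
  ⟨fun _ => A, fun _ => h, (iUnion_const A).symm⟩

theorem IsOpen.isFsigma [PerfectlyNormalSpace X] {U : Set X} (h : IsOpen U) : IsFsigma U :=
  isFsigma_iff_isGδ_compl.2 h.isClosed_compl.isGδ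

theorem IsFsigma.preimage {Y : Type*} [TopologicalSpace Y] {f : X → Y} (hf : Continuous f)
    {A : Set Y} (h : IsFsigma A) : IsFsigma (f ⁻¹' A) :=
  isFsigma_iff_isGδ_compl.2 ((isFsigma_iff_isGδ_compl.1 h).preimage hf)

theorem IsFsigma.inter {A B : Set X} (hA : IsFsigma A) (hB : IsFsigma B) : IsFsigma (A ∩ B) := by
  rw [isFsigma_iff_isGδ_compl, compl_inter] at *
  exact hA.union hB

theorem IsFsigma.iUnion {ι : Sort*} [Countable ι] {A : ι → Set X} (h : ∀ i, IsFsigma (A i)) :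
    IsFsigma (⋃ i, A i) := by
  simp only [isFsigma_iff_isGδ_compl, compl_iUnion] at *
  exact .iInter h

theorem IsFsigma.biInter {ι : Type*} {s : Set ι} (hs : s.Finite) {A : ι → Set X}
    (h : ∀ i ∈ s, IsFsigma (A i)) : IsFsigma (⋂ i ∈ s, A i) := by
  simp only [isFsigma_iff_isGδ_compl, compl_iInter] at *
  exact .biUnion hs h

theorem IsCozDelta.exists_eq_iInter_isOpen_isFsigma {E : Set X} (h : IsCozDelta E) :
    ∃ U : ℕ → Set X, (∀ k, IsOpen (U k)) ∧ (∀ k, IsFsigma (U k)) ∧ E = ⋂ k, U k := by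
  obtain ⟨f, hf, hf01, rfl⟩ := h
  refine ⟨fun k => f k ⁻¹' Ioi 0, fun k => isOpen_Ioi.preimage (hf k),
    fun k => isOpen_Ioi.isFsigma.preimage (hf k), iInter_congr fun k => ?_⟩
  ext x
  simp [(hf01 k x).2]

end Fsigma

section LebesgueClassOne

variable {X Y Z : Type*} [TopologicalSpace X] [TopologicalSpace Y] [TopologicalSpace Z]

theorem Continuous.comp_lebesgueClassOne {g : Y → Z} {f : X → Y} (hg : Continuous g)
    (hf : LebesgueClassOne f) : LebesgueClassOne (g ∘ f) :=
  fun _ hV => hf _ (hV.preimage hg)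

theorem LebesgueClassOne.piecewise {ι : Type*} [Countable ι] {D : ι → Set X}
    (hD : ∀ i, IsFsigma (D i)) (hcover : ⋃ i, D i = univ) {r : ι → X → Y}
    (hr : ∀ i, LebesgueClassOne (r i)) {g : X → Y} (hg : ∀ i, ∀ x ∈ D i, g x = r i x) :
    LebesgueClassOne g := by
  intro V hV
  have hpre : g ⁻¹' V = ⋃ i, D i ∩ r i ⁻¹' V := by
    ext x
    obtain ⟨i, hi⟩ := mem_iUnion.1 (hcover ▸ mem_univ x)
    simp only [mem_preimage, mem_iUnion, mem_inter_iff]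
    exact ⟨fun h => ⟨i, hi, hg i x hi ▸ h⟩, fun ⟨j, hj, h⟩ => (hg j x hj).symm ▸ h⟩
  rw [hpre]
  exact .iUnion fun i => (hD i).inter (hr i V hV)

theorem exists_lebesgueClassOne_glue_of_closed_cover {Z : ℕ → Set X} (hZ : ∀ m, IsClosed (Z m))
    (hZc : ∀ m, IsFsigma (Z m)ᶜ) (hcover : ⋃ m, Z m = univ) {r : ℕ → X → Y}
    (hr : ∀ m, LebesgueClassOne (r m)) :
    ∃ g : X → Y, LebesgueClassOne g ∧ ∀ x, ∃ m, x ∈ Z m ∧ g x = r m x := by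
  classical
  have hex : ∀ x, ∃ m, x ∈ Z m := fun x => mem_iUnion.1 (hcover ▸ mem_univ x)
  have hfirst : ∀ m, {x | Nat.find (hex x) = m} = Z m ∩ ⋂ l ∈ Iio m, (Z l)ᶜ := fun m => by
    ext x
    simp [Nat.find_eq_iff]
  refine ⟨fun x => r (Nat.find (hex x)) x, ?_, fun x => ⟨_, Nat.find_spec (hex x), rfl⟩⟩
  refine LebesgueClassOne.piecewise (D := fun m => {x | Nat.find (hex x) = m}) (fun m => ?_)
    (eq_univ_of_forall fun x => mem_iUnion.2 ⟨_, rfl⟩) hr fun m x hx => by rw [← hx]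
  rw [hfirst]
  exact (hZ m).isFsigma.inter (.biInter (finite_Iio m) fun l _ => hZc l)

end LebesgueClassOne

theorem exists_closed_cover_disjoint_of_iInter {X ι : Type*} [TopologicalSpace X] [Finite ι]
    [Nonempty ι] {E : ι → Set X} (hdisj : Pairwise (Disjoint on E)) {U : ι → ℕ → Set X}
    (hUo : ∀ i k, IsOpen (U i k)) (hUσ : ∀ i k, IsFsigma (U i k)) (hEU : ∀ i, E i = ⋂ k, U i k) :
    ∃ (Z : ℕ → Set X) (label : ℕ → ι), (∀ m, IsClosed (Z m)) ∧ (∀ m, IsFsigma (Z m)ᶜ) ∧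
      ⋃ m, Z m = univ ∧ ∀ m i, i ≠ label m → Disjoint (Z m) (E i) := by
  let W : ι × (ι → ℕ) → Set X := fun p => ⋂ (j) (_ : j ≠ p.1), (U j (p.2 j))ᶜ
  obtain ⟨e, he⟩ := exists_surjective_nat (ι × (ι → ℕ))
  refine ⟨W ∘ e, fun m => (e m).1, fun m => ?_, fun m => ?_, ?_, fun m i hi => ?_⟩
  · exact isClosed_biInter fun j _ => (hUo _ _).isClosed_compl
  · simp only [comp_apply, W, compl_iInter, compl_compl]
    exact .iUnion fun j => .iUnion fun _ => hUσ _ _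
  · refine eq_univ_of_forall fun x => ?_
    obtain ⟨i, hi⟩ : ∃ i, ∀ j ≠ i, x ∉ E j := by
      by_cases h : ∃ i, x ∈ E i
      · obtain ⟨i, hxi⟩ := h
        exact ⟨i, fun j hj hxj => disjoint_left.1 (hdisj hj) hxj hxi⟩
      · exact ⟨Classical.arbitrary ι, fun j _ hxj => h ⟨j, hxj⟩⟩
    have hκ : ∀ j, ∃ k, j ≠ i → x ∉ U j k := fun j => by
      by_cases hj : j = i
      · exact ⟨0, fun h => (h hj).elim⟩
      · obtain ⟨k, hk⟩ : ∃ k, x ∉ U j k := by simpa [hEU j] using hi j hj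
        exact ⟨k, fun _ => hk⟩
    choose κ hκ using hκ
    obtain ⟨m, hm⟩ := he (i, κ)
    exact mem_iUnion.2 ⟨m, by simpa [W, hm] using hκ⟩
  · refine disjoint_left.2 fun x hxW hxE => ?_
    have hxU : x ∈ U i ((e m).2 i) := by
      rw [hEU i] at hxE
      exact mem_iInter.1 hxE _
    exact (mem_iInter₂.1 hxW i hi) hxU

/-- A finite union of pairwise disjoint H₁-retracts which are Coz_δ-sets is an H₁-retract. -/
theorem isH1Retract_union_of_cozDelta {X : Type*} [TopologicalSpace X] {n : ℕ} (hn : 0 < n)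
    (E : Fin n → Set X) (hdisj : Pairwise (Function.onFun Disjoint E))
    (hret : ∀ i, IsH1Retract (E i)) (hcoz : ∀ i, IsCozDelta (E i)) :
    IsH1Retract (⋃ i, E i) := by
  choose r hfix hr using hret
  choose U hUo hUσ hEU using fun i => (hcoz i).exists_eq_iInter_isOpen_isFsigma
  have : Nonempty (Fin n) := ⟨⟨0, hn⟩⟩
  obtain ⟨Z, label, hZ, hZc, hcover, hZE⟩ :=
    exists_closed_cover_disjoint_of_iInter hdisj hUo hUσ hEU
  obtain ⟨g, hg, hgr⟩ := exists_lebesgueClassOne_glue_of_closed_cover hZ hZc hcover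
    (r := fun m => inclusion (subset_iUnion E (label m)) ∘ r (label m))
    fun m => (continuous_inclusion _).comp_lebesgueClassOne (hr _)
  refine ⟨g, fun x => ?_, hg⟩
  obtain ⟨j, hj⟩ := mem_iUnion.1 x.2
  obtain ⟨m, hxm, hgx⟩ := hgr x
  obtain rfl : label m = j := by
    by_contra h
    exact disjoint_left.1 (hZE m j (Ne.symm h)) hxm hj
  rw [hgx, comp_apply, hfix (label m) ⟨x, hj⟩]
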